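/- arXiv:2304.08084 — 5 statements merged into one kernel-verified Lean document; each statement's English description precedes it below -/
import Mathlib

section
/- In a cancellative monoid M with group of units U, the H-class of any element x equals (U*x) ∩ (x*U). -/
/-- In a cancellative monoid, the H-class of `x` equals `(U*x) ∩ (x*U)`. -/
theorem H_class_cancellative {M : Type*} [Monoid M]
    (hrc : ∀ a b c : M, a * c = b * c → a = b)
    (hlc : ∀ a b c : M, a * b = a * c → b = c) (x : M) :
    {y : M | ({c : M | ∃ m : M, x * m = c} = {c : M | ∃ m : M, y * m = c}) ∧
        ({c : M | ∃ m : M, m * x = c} = {c : M | ∃ m : M, m * y = c})} =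
      {y : M | ∃ u : M, IsUnit u ∧ y = u * x} ∩ {y : M | ∃ u : M, IsUnit u ∧ y = x * u} := by
  ext y
  simp only [Set.mem_setOf_eq, Set.mem_inter_iff]
  constructor
  · rintro ⟨h1, h2⟩
    have hy1 : ∃ m : M, x * m = y := by
      have : y ∈ {c : M | ∃ m : M, y * m = c} := ⟨1, mul_one y⟩
      rw [← h1] at this; exact this
    have hx1 : ∃ m : M, y * m = x := by
      have : x ∈ {c : M | ∃ m : M, x * m = c} := ⟨1, mul_one x⟩
      rw [h1] at this; exact this
    have hy2 : ∃ n : M, n * x = y := by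
      have : y ∈ {c : M | ∃ m : M, m * y = c} := ⟨1, one_mul y⟩
      rw [← h2] at this; exact this
    have hx2 : ∃ n : M, n * y = x := by
      have : x ∈ {c : M | ∃ m : M, m * x = c} := ⟨1, one_mul x⟩
      rw [h2] at this; exact this
    obtain ⟨m, hm⟩ := hy1
    obtain ⟨m', hm'⟩ := hx1
    obtain ⟨n, hn⟩ := hy2
    obtain ⟨n', hn'⟩ := hx2
    have hmm' : m * m' = 1 := by
      apply hlc x
      rw [← mul_assoc, hm, hm', mul_one]
    have hm'm : m' * m = 1 := by
      apply hrc _ _ m'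
      rw [mul_assoc, hmm', mul_one, one_mul]
    have hn'n : n' * n = 1 := by
      apply hrc _ _ x
      rw [mul_assoc, hn, hn', one_mul]
    have hnn' : n * n' = 1 := by
      apply hrc _ _ n
      rw [mul_assoc, hn'n, mul_one, one_mul]
    refine ⟨⟨n, ⟨⟨n, n', hnn', hn'n⟩, rfl⟩, hn.symm⟩,
      ⟨m, ⟨⟨m, m', hmm', hm'm⟩, rfl⟩, hm.symm⟩⟩
  · rintro ⟨⟨u, hu, rfl⟩, ⟨v, hv, hyv⟩⟩
    obtain ⟨U, rfl⟩ := hu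
    obtain ⟨V, rfl⟩ := hv
    constructor
    · ext c
      simp only [Set.mem_setOf_eq]
      constructor
      · rintro ⟨m, rfl⟩
        exact ⟨(V⁻¹ : Mˣ) * m, by rw [hyv, mul_assoc, ← mul_assoc (V:M), Units.mul_inv, one_mul]⟩
      · rintro ⟨m, rfl⟩
        exact ⟨(V : M) * m, by rw [hyv, mul_assoc]⟩
    · ext c
      simp only [Set.mem_setOf_eq]
      constructor
      · rintro ⟨m, rfl⟩
        exact ⟨m * (U⁻¹ : Mˣ), by rw [mul_assoc, ← mul_assoc ((U⁻¹ : Mˣ) : M), Units.inv_mul, one_mul]⟩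
      · rintro ⟨m, rfl⟩
        exact ⟨m * U, by rw [mul_assoc]⟩
end

section
/- Let M be a submonoid of a group G, let U be the group of units of M, and let x ∈ M. Then an element m ∈ M satisfies H_x * m ⊆ H_x (where H_x is the H-class of x in M) if and only if m ∈ U ∩ x⁻¹ U x (the intersection taken in G). Consequently the right stabilizer of H_x equals U ∩ x⁻¹ U x. -/
private lemma rset_iff {G : Type*} [Group G] (M : Submonoid G) (x y : G) :
    ({c : G | ∃ m ∈ M, x * m = c} = {c : G | ∃ m ∈ M, y * m = c}) ↔
      (x⁻¹ * y ∈ M ∧ y⁻¹ * x ∈ M) := by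
  constructor
  · intro h
    constructor
    · have hy : y ∈ {c : G | ∃ m ∈ M, y * m = c} := ⟨1, M.one_mem, mul_one y⟩
      rw [← h] at hy
      obtain ⟨m, hm, hmy⟩ := hy
      have : x⁻¹ * y = m := by rw [← hmy]; group
      rwa [this]
    · have hx : x ∈ {c : G | ∃ m ∈ M, x * m = c} := ⟨1, M.one_mem, mul_one x⟩
      rw [h] at hx
      obtain ⟨m, hm, hmy⟩ := hx
      have : y⁻¹ * x = m := by rw [← hmy]; group
      rwa [this]
  · rintro ⟨h1, h2⟩
    ext c
    simp only [Set.mem_setOf_eq]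
    constructor
    · rintro ⟨m, hm, rfl⟩
      exact ⟨y⁻¹ * x * m, M.mul_mem h2 hm, by group⟩
    · rintro ⟨m, hm, rfl⟩
      exact ⟨x⁻¹ * y * m, M.mul_mem h1 hm, by group⟩

private lemma lset_iff {G : Type*} [Group G] (M : Submonoid G) (x y : G) :
    ({c : G | ∃ m ∈ M, m * x = c} = {c : G | ∃ m ∈ M, m * y = c}) ↔
      (y * x⁻¹ ∈ M ∧ x * y⁻¹ ∈ M) := by
  constructor
  · intro h
    constructor
    · have hy : y ∈ {c : G | ∃ m ∈ M, m * y = c} := ⟨1, M.one_mem, one_mul y⟩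
      rw [← h] at hy
      obtain ⟨m, hm, hmy⟩ := hy
      have : y * x⁻¹ = m := by rw [← hmy]; group
      rwa [this]
    · have hx : x ∈ {c : G | ∃ m ∈ M, m * x = c} := ⟨1, M.one_mem, one_mul x⟩
      rw [h] at hx
      obtain ⟨m, hm, hmy⟩ := hx
      have : x * y⁻¹ = m := by rw [← hmy]; group
      rwa [this]
  · rintro ⟨h1, h2⟩
    ext c
    simp only [Set.mem_setOf_eq]
    constructor
    · rintro ⟨m, hm, rfl⟩
      exact ⟨m * (x * y⁻¹), M.mul_mem hm h2, by group⟩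
    · rintro ⟨m, hm, rfl⟩
      exact ⟨m * (y * x⁻¹), M.mul_mem hm h1, by group⟩

/-- For a submonoid `M` of a group `G` with set of units `U` and `x ∈ M`,
an element `m ∈ M` right-stabilises the H-class `H_x` of `x` in `M`
iff `m ∈ U ∩ x⁻¹Ux`. -/
theorem stabiliser_of_H_class_in_group_embeddable {G : Type*} [Group G]
    (M : Submonoid G) (x : G) (hx : x ∈ M)
    (U : Set G) (hU : U = {u : G | u ∈ M ∧ u⁻¹ ∈ M})
    (Hx : Set G)
    (hHx : Hx = {y : G | y ∈ M ∧
      ({c : G | ∃ m ∈ M, x * m = c} = {c : G | ∃ m ∈ M, y * m = c}) ∧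
      ({c : G | ∃ m ∈ M, m * x = c} = {c : G | ∃ m ∈ M, m * y = c})}) :
    ∀ m ∈ M, ((∀ h ∈ Hx, h * m ∈ Hx) ↔ (m ∈ U ∧ x * m * x⁻¹ ∈ U)) := by
  subst hU hHx
  intro m hm
  constructor
  · intro hst
    have hxHx : x ∈ {y : G | y ∈ M ∧
        ({c : G | ∃ m ∈ M, x * m = c} = {c : G | ∃ m ∈ M, y * m = c}) ∧
        ({c : G | ∃ m ∈ M, m * x = c} = {c : G | ∃ m ∈ M, m * y = c})} :=
      ⟨hx, rfl, rfl⟩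
    obtain ⟨hxm, hr, hl⟩ := hst x hxHx
    rw [rset_iff] at hr
    rw [lset_iff] at hl
    refine ⟨⟨hm, ?_⟩, ?_, ?_⟩
    · have := hr.2
      have e : (x * m)⁻¹ * x = m⁻¹ := by group
      rwa [e] at this
    · have := hl.1
      have e : x * m * x⁻¹ = x * m * x⁻¹ := rfl
      exact this
    · have := hl.2
      have e : x * (x * m)⁻¹ = (x * m * x⁻¹)⁻¹ := by group
      rwa [e] at this
  · rintro ⟨⟨hm1, hm2⟩, hc1, hc2⟩
    intro h hh
    obtain ⟨hhM, hr, hl⟩ := hh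
    rw [rset_iff] at hr
    rw [lset_iff] at hl
    refine ⟨M.mul_mem hhM hm, ?_, ?_⟩
    · rw [rset_iff]
      constructor
      · have : x⁻¹ * (h * m) = (x⁻¹ * h) * m := by group
        rw [this]
        exact M.mul_mem hr.1 hm
      · have : (h * m)⁻¹ * x = m⁻¹ * (h⁻¹ * x) := by group
        rw [this]
        exact M.mul_mem hm2 hr.2
    · rw [lset_iff]
      constructor
      · have : h * m * x⁻¹ = (h * x⁻¹) * (x * m * x⁻¹) := by group
        rw [this]
        exact M.mul_mem hl.1 hc1
      · have : x * (h * m)⁻¹ = (x * m⁻¹ * x⁻¹) * (x * h⁻¹) := by group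
        rw [this]
        have hc2' : x * m⁻¹ * x⁻¹ ∈ M := by
          have e : x * m⁻¹ * x⁻¹ = (x * m * x⁻¹)⁻¹ := by group
          rw [e]; exact hc2
        exact M.mul_mem hc2' hl.2
end

section
/- Let M be a submonoid of a group G with group of units U, and x ∈ M. The Schützenberger group of the H-class H_x of x in M is isomorphic to the group U ∩ x⁻¹ U x (intersection in G). -/
/-- For a submonoid `M` of a group `G` with set of units `U` and `x ∈ M`, the
Schützenberger group of the H-class `H_x` of `x` in `M` (the quotient of the right
stabiliser of `H_x` by the congruence identifying elements acting equally on `H_x`)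
is isomorphic to `U ∩ x⁻¹Ux`. -/
theorem schutzenberger_group_of_group_embeddable {G : Type*} [Group G]
    (M : Submonoid G) (x : G) (hx : x ∈ M)
    (U : Set G) (hU : U = {u : G | u ∈ M ∧ u⁻¹ ∈ M})
    (Hx : Set G)
    (hHx : Hx = {y : G | y ∈ M ∧
      ({c : G | ∃ m ∈ M, x * m = c} = {c : G | ∃ m ∈ M, y * m = c}) ∧
      ({c : G | ∃ m ∈ M, m * x = c} = {c : G | ∃ m ∈ M, m * y = c})})
    (Stab : Submonoid G)
    (hStab : (Stab : Set G) = {s : G | s ∈ M ∧ ∀ h ∈ Hx, h * s ∈ Hx})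
    (σ : Con Stab)
    (hσ : ∀ s t : Stab, σ s t ↔ ∀ h ∈ Hx, h * (s : G) = h * (t : G))
    (K : Submonoid G)
    (hK : (K : Set G) = {g : G | g ∈ U ∧ x * g * x⁻¹ ∈ U}) :
    Nonempty (σ.Quotient ≃* K) := by
  have hxHx : x ∈ Hx := by rw [hHx]; exact ⟨hx, rfl, rfl⟩
  -- the key set equality : Stab = K as sets
  have hSK : ∀ s : G, s ∈ Stab ↔ s ∈ K := by
    intro s
    rw [← SetLike.mem_coe, ← SetLike.mem_coe, hStab, hK, hU]
    constructor
    · rintro ⟨hsM, hs⟩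
      have hxs := hs x hxHx
      rw [hHx] at hxs
      obtain ⟨hxsM, hR, hL⟩ := hxs
      -- s⁻¹ ∈ M
      have h1 : x ∈ {c : G | ∃ m ∈ M, x * s * m = c} := by
        rw [← hR]; exact ⟨1, M.one_mem, mul_one x⟩
      obtain ⟨m, hm, hme⟩ := h1
      have hsinv : s⁻¹ ∈ M := by
        have hsm : s * m = 1 := by
          have : x * (s * m) = x * 1 := by rw [← mul_assoc, hme, mul_one]
          exact mul_left_cancel this
        have : m = s⁻¹ := eq_inv_of_mul_eq_one_right (by
          have : s * m * m⁻¹ * s⁻¹ * (s * m) = s * m * m⁻¹ * s⁻¹ * 1 := by rw [hsm]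
          group at this ⊢
          rw [hsm])
        rwa [← this]
      -- x * s * x⁻¹ ∈ M
      have h2 : x * s ∈ {c : G | ∃ m ∈ M, m * x = c} := by
        rw [hL]; exact ⟨1, M.one_mem, one_mul _⟩
      obtain ⟨m2, hm2, hm2e⟩ := h2
      have hc : x * s * x⁻¹ ∈ M := by
        have : m2 = x * s * x⁻¹ := by rw [← hm2e]; group
        rwa [← this]
      -- x * s⁻¹ * x⁻¹ ∈ M
      have h3 : x ∈ {c : G | ∃ m ∈ M, m * (x * s) = c} := by
        rw [← hL]; exact ⟨1, M.one_mem, one_mul x⟩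
      obtain ⟨m3, hm3, hm3e⟩ := h3
      have hcinv : x * s⁻¹ * x⁻¹ ∈ M := by
        have : m3 = x * s⁻¹ * x⁻¹ := by
          have : m3 * (x * s) * (x * s)⁻¹ = x * (x * s)⁻¹ := by rw [hm3e]
          rw [mul_inv_cancel_right] at this
          rw [this]; group
        rwa [← this]
      refine ⟨⟨hsM, hsinv⟩, hc, ?_⟩
      have : (x * s * x⁻¹)⁻¹ = x * s⁻¹ * x⁻¹ := by group
      rwa [this]
    · rintro ⟨⟨hsM, hsinv⟩, hc, hcinv⟩
      have hcinv' : x * s⁻¹ * x⁻¹ ∈ M := by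
        have : (x * s * x⁻¹)⁻¹ = x * s⁻¹ * x⁻¹ := by group
        rwa [this] at hcinv
      refine ⟨hsM, fun h hh => ?_⟩
      rw [hHx] at hh ⊢
      obtain ⟨hhM, hhR, hhL⟩ := hh
      refine ⟨M.mul_mem hhM hsM, ?_, ?_⟩
      · rw [hhR]
        ext c
        constructor
        · rintro ⟨m, hm, rfl⟩
          exact ⟨s⁻¹ * m, M.mul_mem hsinv hm, by group⟩
        · rintro ⟨m, hm, rfl⟩
          exact ⟨s * m, M.mul_mem hsM hm, by group⟩
      · ext c
        constructor
        · rintro ⟨m, hm, rfl⟩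
          -- m * x = (m * (x * s⁻¹ * x⁻¹)) * x * s
          have h4 : m * (x * s⁻¹ * x⁻¹) * x ∈ {c : G | ∃ m ∈ M, m * h = c} := by
            rw [← hhL]; exact ⟨m * (x * s⁻¹ * x⁻¹), M.mul_mem hm hcinv', rfl⟩
          obtain ⟨m', hm', hm'e⟩ := h4
          refine ⟨m', hm', ?_⟩
          rw [← mul_assoc, hm'e]; group
        · rintro ⟨m, hm, rfl⟩
          have h5 : m * h ∈ {c : G | ∃ m ∈ M, m * x = c} := by
            rw [hhL]; exact ⟨m, hm, rfl⟩
          obtain ⟨m', hm', hm'e⟩ := h5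
          refine ⟨m' * (x * s * x⁻¹), M.mul_mem hm' hc, ?_⟩
          rw [← mul_assoc m h s, ← hm'e]; group
  -- the monoid hom Stab →* K
  have hmem : ∀ s : Stab, (s : G) ∈ K := fun s => (hSK s).1 s.2
  let f : Stab →* K :=
    { toFun := fun s => ⟨(s : G), hmem s⟩
      map_one' := rfl
      map_mul' := fun a b => rfl }
  have hker : σ ≤ Con.ker f := by
    intro a b hab
    have h1 := (hσ a b).1 hab x hxHx
    have h2 : (a : G) = b := mul_left_cancel h1
    show f a = f b
    simp only [f, MonoidHom.coe_mk, OneHom.coe_mk]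
    exact Subtype.ext h2
  let F : σ.Quotient →* K := Con.lift σ f hker
  have hFbij : Function.Bijective F := by
    constructor
    · intro a b
      induction a using Con.induction_on with
      | H a =>
      induction b using Con.induction_on with
      | H b =>
      intro hab
      have heq : f a = f b := hab
      have heq2 : (a : G) = (b : G) := congrArg (fun k : K => (k : G)) heq
      rw [Subtype.ext heq2]
    · rintro ⟨k, hk⟩
      exact ⟨((⟨k, (hSK k).2 hk⟩ : Stab) : σ.Quotient), rfl⟩
  exact ⟨MulEquiv.ofBijective F hFbij⟩
end

section
/- Let M be a right cancellative monoid and H an H-class of M. If u ∈ M satisfies u*H ⊆ H (and H is nonempty), then u is a unit of M. Moreover, distinct units u ≠ u' stabilizing H induce distinct maps h ↦ u*h on H. Consequently the left Schützenberger group of H embeds into the group of units U of M. -/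
/-- In a right cancellative monoid, any element left-stabilising an H-class is a
unit, distinct stabilising elements induce distinct left translations, and hence
the left Schützenberger group (i.e. the left stabiliser, acting faithfully)
embeds into the group of units. -/
theorem left_schutzenberger_embeds_in_units {M : Type*} [Monoid M]
    (hrc : ∀ a b c : M, a * c = b * c → a = b)
    (x : M) (H : Set M)
    (hH : H = {y : M | ({c : M | ∃ m : M, x * m = c} = {c : M | ∃ m : M, y * m = c}) ∧
      ({c : M | ∃ m : M, m * x = c} = {c : M | ∃ m : M, m * y = c})}) :
    (∀ u : M, (∀ h ∈ H, u * h ∈ H) → IsUnit u) ∧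
    (∀ u u' : M, (∀ h ∈ H, u * h ∈ H) → (∀ h ∈ H, u' * h ∈ H) →
      (∀ h ∈ H, u * h = u' * h) → u = u') ∧
    (∃ f : {u : M | ∀ h ∈ H, u * h ∈ H} → Mˣ,
      Function.Injective f ∧ ∀ u, ((f u : Mˣ) : M) = (u : M)) := by
  have hx : x ∈ H := by rw [hH]; exact ⟨rfl, rfl⟩
  have main : ∀ u : M, (∀ h ∈ H, u * h ∈ H) → IsUnit u := by
    intro u hu
    have hux : u * x ∈ H := hu x hx
    rw [hH] at hux
    have hL := hux.2
    -- x is in the L-set of x, hence in that of u*x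
    have hx' : x ∈ {c : M | ∃ m : M, m * (u * x) = c} := by
      rw [← hL]; exact ⟨1, one_mul x⟩
    obtain ⟨m, hm⟩ := hx'
    have hmu : m * u = 1 := by
      apply hrc _ _ x
      rw [one_mul, mul_assoc]
      exact hm
    have hum : u * m = 1 := by
      apply hrc _ _ u
      rw [one_mul, mul_assoc, hmu, mul_one]
    exact ⟨⟨u, m, hum, hmu⟩, rfl⟩
  refine ⟨main, ?_, ?_⟩
  · intro u u' _ _ heq
    exact hrc u u' x (heq x hx)
  · refine ⟨fun u => (main u u.2).unit, ?_, fun u => (main u u.2).unit_spec⟩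
    intro u u' h
    have : ((main u u.2).unit : M) = ((main u' u'.2).unit : M) :=
      congrArg (Units.val) h
    rw [(main u u.2).unit_spec, (main u' u'.2).unit_spec] at this
    exact Subtype.ext this
end

section
/- Let P = G * F be the free product of a group G with a free group F on one generator t, let U be the subgroup of P generated by G and t G t⁻¹, and suppose H is a subgroup of G and z ∈ G with z ∉ H. If an element of U of normal-form length with a single t-block, namely t v t⁻¹ with v ∈ H, lies in (t z⁻¹ t⁻¹) U (t z t⁻¹), then it has the form t z⁻¹ v' z t⁻¹ with v' ∈ H; consequently U ∩ (t z⁻¹ t⁻¹) U (t z t⁻¹) computed on such elements is isomorphic to H ∩ z⁻¹ H z. -/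
open Monoid

section Aux
variable {G : Type*} [Group G]

noncomputable def mySwap (H : Subgroup G) : Equiv.Perm (Option (G ⧸ H)) :=
  haveI := Classical.decEq (Option (G ⧸ H))
  Equiv.swap (none : Option (G ⧸ H)) (some ((1 : G) : G ⧸ H))

noncomputable def myPhiG (H : Subgroup G) : G →* Equiv.Perm (Option (G ⧸ H)) :=
  MonoidHom.mk' (fun g => (MulAction.toPerm g : Equiv.Perm (G ⧸ H)).optionCongr)
    (by
      intro a b
      ext x
      cases x <;> simp [mul_smul])

noncomputable def myPhi (H : Subgroup G) :
    Monoid.Coprod G (FreeGroup Unit) →* Equiv.Perm (Option (G ⧸ H)) :=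
  Monoid.Coprod.lift (myPhiG H) (FreeGroup.lift fun _ => mySwap H)

lemma mySwap_none (H : Subgroup G) : mySwap H none = some ((1 : G) : G ⧸ H) := by
  unfold mySwap
  letI := Classical.decEq (Option (G ⧸ H))
  exact Equiv.swap_apply_left _ _

lemma mySwap_some_one (H : Subgroup G) : mySwap H (some ((1 : G) : G ⧸ H)) = none := by
  unfold mySwap
  letI := Classical.decEq (Option (G ⧸ H))
  exact Equiv.swap_apply_right _ _

lemma mySwap_other (H : Subgroup G) (c : G ⧸ H) (hc : c ≠ ((1 : G) : G ⧸ H)) :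
    mySwap H (some c) = some c := by
  unfold mySwap
  letI := Classical.decEq (Option (G ⧸ H))
  exact Equiv.swap_apply_of_ne_of_ne (by simp) (by simpa using hc)

lemma mySwap_inv (H : Subgroup G) : (mySwap H)⁻¹ = mySwap H := by
  unfold mySwap
  letI := Classical.decEq (Option (G ⧸ H))
  exact Equiv.swap_inv _ _

lemma myKey (H : Subgroup G)
    (t : Monoid.Coprod G (FreeGroup Unit))
    (ht : t = Monoid.Coprod.inr (FreeGroup.of ()))
    (U : Subgroup (Monoid.Coprod G (FreeGroup Unit)))
    (hU : U = Subgroup.closure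
      (Set.range (Monoid.Coprod.inl : G →* Monoid.Coprod G (FreeGroup Unit)) ∪
        {x | ∃ h ∈ H, x = t * Monoid.Coprod.inl h * t⁻¹}))
    (w : G) (hw : t * Monoid.Coprod.inl w * t⁻¹ ∈ U) : w ∈ H := by
  classical
  set φ := myPhi H with hφ
  have hφt : φ t = mySwap H := by
    simp [hφ, myPhi, ht]
  have hφtinv : φ t⁻¹ = mySwap H := by
    rw [map_inv, hφt, mySwap_inv]
  have hφinl : ∀ g : G, φ (Monoid.Coprod.inl g)
      = (MulAction.toPerm g : Equiv.Perm (G ⧸ H)).optionCongr := by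
    intro g; simp [hφ, myPhi, myPhiG]
  have hconj : ∀ g : G, φ (t * Monoid.Coprod.inl g * t⁻¹) none
      = mySwap H (some ((g : G) : G ⧸ H)) := by
    intro g
    rw [map_mul, map_mul, hφt, hφtinv]
    simp only [Equiv.Perm.mul_apply, mySwap_none, hφinl]
    rw [Equiv.optionCongr_apply, Option.map_some, MulAction.toPerm_apply,
      MulAction.Quotient.smul_mk, smul_eq_mul, mul_one]
  -- U fixes `none`
  have hUle : U ≤ Subgroup.comap φ
      (MulAction.stabilizer (Equiv.Perm (Option (G ⧸ H))) (none : Option (G ⧸ H))) := by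
    rw [hU]
    refine (Subgroup.closure_le _).mpr ?_
    rintro x (⟨g, rfl⟩ | ⟨h, hh, rfl⟩) <;>
      refine Subgroup.mem_comap.mpr (MulAction.mem_stabilizer_iff.mpr ?_)
    · show φ (Monoid.Coprod.inl g) none = none
      rw [hφinl]; simp
    · show φ (t * Monoid.Coprod.inl h * t⁻¹) none = none
      rw [hconj]
      have h1 : ((h : G) : G ⧸ H) = ((1 : G) : G ⧸ H) := by
        rw [QuotientGroup.eq]; simpa using hh
      rw [h1, mySwap_some_one]
  have hfix : φ (t * Monoid.Coprod.inl w * t⁻¹) none = none :=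
    MulAction.mem_stabilizer_iff.mp (Subgroup.mem_comap.mp (hUle hw))
  rw [hconj] at hfix
  by_contra hwH
  have hne : ((w : G) : G ⧸ H) ≠ ((1 : G) : G ⧸ H) := by
    rw [Ne, QuotientGroup.eq]; simpa using hwH
  rw [mySwap_other H _ hne] at hfix
  exact Option.some_ne_none _ hfix

end Aux

/-- In `P = G * ⟨t⟩`, with `U = ⟨G, tHt⁻¹⟩`, `H ≤ G` and `z ∈ G \ H`: any element
`t v t⁻¹` with `v ∈ H` lying in `(tz⁻¹t⁻¹)U(tzt⁻¹)` has the form `t z⁻¹ v' z t⁻¹`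
with `v' ∈ H`; consequently `U ∩ (tz⁻¹t⁻¹)U(tzt⁻¹)` restricted to such elements
is in bijection with `H ∩ z⁻¹Hz`. -/
theorem conjugate_intersection_in_free_product {G : Type*} [Group G]
    (H : Subgroup G) (z : G) (hz : z ∉ H)
    (t : Monoid.Coprod G (FreeGroup Unit))
    (ht : t = Monoid.Coprod.inr (FreeGroup.of ()))
    (U : Subgroup (Monoid.Coprod G (FreeGroup Unit)))
    (hU : U = Subgroup.closure
      (Set.range (Monoid.Coprod.inl : G →* Monoid.Coprod G (FreeGroup Unit)) ∪
        {x | ∃ h ∈ H, x = t * Monoid.Coprod.inl h * t⁻¹})) :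
    (∀ v ∈ H,
      (∃ u ∈ U, t * Monoid.Coprod.inl v * t⁻¹ =
        (t * Monoid.Coprod.inl z⁻¹ * t⁻¹) * u * (t * Monoid.Coprod.inl z * t⁻¹)) →
      ∃ v' ∈ H, v = z⁻¹ * v' * z) ∧
    Nonempty ({x : Monoid.Coprod G (FreeGroup Unit) |
        (∃ v ∈ H, x = t * Monoid.Coprod.inl v * t⁻¹) ∧ x ∈ U ∧
        ∃ u ∈ U, x = (t * Monoid.Coprod.inl z⁻¹ * t⁻¹) * u *
          (t * Monoid.Coprod.inl z * t⁻¹)} ≃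
      ↥(H ⊓ H.comap (MulAut.conj z).toMonoidHom)) := by
  have hgenH : ∀ h ∈ H, t * Monoid.Coprod.inl h * t⁻¹ ∈ U := by
    intro h hh
    rw [hU]
    exact Subgroup.subset_closure (Or.inr ⟨h, hh, rfl⟩)
  have key : ∀ v : G, (∃ u ∈ U, t * Monoid.Coprod.inl v * t⁻¹ =
        (t * Monoid.Coprod.inl z⁻¹ * t⁻¹) * u * (t * Monoid.Coprod.inl z * t⁻¹)) →
      z * v * z⁻¹ ∈ H := by
    rintro v ⟨u, hu, hequ⟩
    have hu' : u = t * Monoid.Coprod.inl (z * v * z⁻¹) * t⁻¹ := by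
      have h2 : u = (t * Monoid.Coprod.inl z⁻¹ * t⁻¹)⁻¹ * (t * Monoid.Coprod.inl v * t⁻¹) *
          (t * Monoid.Coprod.inl z * t⁻¹)⁻¹ := by
        rw [hequ]; group
      rw [h2]
      simp only [map_mul, map_inv, mul_inv_rev, inv_inv]
      group
    rw [hu'] at hu
    exact myKey H t ht U hU _ hu
  constructor
  · rintro v hv hex
    exact ⟨z * v * z⁻¹, key v hex, by group⟩
  · have halg : ∀ v : G, (t * Monoid.Coprod.inl z⁻¹ * t⁻¹) *
        (t * Monoid.Coprod.inl (z * v * z⁻¹) * t⁻¹) * (t * Monoid.Coprod.inl z * t⁻¹)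
        = t * Monoid.Coprod.inl v * t⁻¹ := by
      intro v
      simp only [map_mul, map_inv]
      group
    refine ⟨Equiv.symm (Equiv.ofBijective
      (fun v => ⟨t * Monoid.Coprod.inl (v : G) * t⁻¹, ?_, ?_, ?_⟩) ⟨?_, ?_⟩)⟩
    · exact ⟨v, (Subgroup.mem_inf.mp v.2).1, rfl⟩
    · exact hgenH _ (Subgroup.mem_inf.mp v.2).1
    · refine ⟨t * Monoid.Coprod.inl (z * (v : G) * z⁻¹) * t⁻¹, hgenH _ ?_, (halg _).symm⟩
      have h3 := (Subgroup.mem_inf.mp v.2).2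
      rw [Subgroup.mem_comap] at h3
      exact h3
    · intro a b hab
      have h2 : t * Monoid.Coprod.inl (a : G) * t⁻¹ = t * Monoid.Coprod.inl (b : G) * t⁻¹ :=
        congrArg Subtype.val hab
      have h1 : Monoid.Coprod.inl (a : G) = Monoid.Coprod.inl (b : G) :=
        mul_left_cancel (mul_right_cancel h2)
      exact Subtype.ext (Monoid.Coprod.inl_injective h1)
    · rintro ⟨x, ⟨v, hv, rfl⟩, hxU, hex⟩
      refine ⟨⟨v, Subgroup.mem_inf.mpr ⟨hv, ?_⟩⟩, rfl⟩
      rw [Subgroup.mem_comap]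
      exact key v hex
end
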